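/- Fix 0 ≤ β < 1. For every k ≥ 1, (log(k+1))/4 ≤ sum over i from 0 to k-1 of (c_i^β)^2 ≤ (1 + log k)/(1-β)^2, where c_i^β = sum_{j=0}^{i} β^{i-j} r_j r_{i-j} and r_j = binom(2j,j)/4^j. -/

import Mathlib

noncomputable def r (j : ℕ) : ℝ := (Nat.choose (2*j) j : ℝ) / 4^j

noncomputable def c (β : ℝ) (i : ℕ) : ℝ :=
  ∑ j ∈ Finset.range (i + 1), β^(i - j) * r j * r (i - j)

/-!
Since `r (n + 1) = r n * (2n + 1) / (2n + 2)`, induction squeezes `r n ^ 2` between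
`1 / (4 (n + 1))` and `1 / (n + 1)`. The term `j = i` of `c β i` gives `r i ≤ c β i`, while
`(j + 1) (i - j + 1) ≥ i + 1` bounds every product `r j * r (i - j)` by `1 / √(i + 1)`, so
`c β i ≤ (1 - β)⁻¹ / √(i + 1)` after summing the geometric weights. Squaring and summing over
`i < k` compares `∑ (c β i) ^ 2` with the harmonic number `H k`, and
`log (k + 1) ≤ H k ≤ 1 + log k`.
-/

open Finset

lemma r_zero : r 0 = 1 := by simp [r]

lemma r_eq_centralBinom (n : ℕ) : r n = (Nat.centralBinom n : ℝ) / 4 ^ n := rfl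

lemma r_pos (n : ℕ) : 0 < r n := by
  rw [r_eq_centralBinom]
  have := Nat.centralBinom_pos n
  positivity

lemma r_succ (n : ℕ) : r (n + 1) = r n * ((2 * n + 1) / (2 * n + 2)) := by
  have h : ((n : ℝ) + 1) * (Nat.centralBinom (n + 1) : ℝ) =
      2 * (2 * n + 1) * Nat.centralBinom n := by
    exact_mod_cast Nat.succ_mul_centralBinom_succ n
  simp only [r_eq_centralBinom]
  field_simp
  rw [pow_succ]
  linear_combination (2 * (4 : ℝ) ^ n) * h

lemma r_sq_le (n : ℕ) : r n ^ 2 ≤ ((n : ℝ) + 1)⁻¹ := by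
  induction n with
  | zero => simp [r_zero]
  | succ n ih =>
    rw [r_succ, mul_pow]
    calc r n ^ 2 * ((2 * n + 1) / (2 * n + 2)) ^ 2
        ≤ ((n : ℝ) + 1)⁻¹ * ((2 * n + 1) / (2 * n + 2)) ^ 2 := by gcongr
      _ ≤ ((n + 1 : ℕ) + 1 : ℝ)⁻¹ := by
        rw [div_pow, ← div_eq_inv_mul, div_div, inv_eq_one_div,
          div_le_div_iff₀ (by positivity) (by positivity)]
        push_cast
        nlinarith

lemma inv_four_mul_le_r_sq_of_pos {n : ℕ} (hn : 1 ≤ n) : (4 * (n : ℝ))⁻¹ ≤ r n ^ 2 := by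
  induction n, hn using Nat.le_induction with
  | base => norm_num [r]
  | succ n hn ih =>
    have hn' : (1 : ℝ) ≤ n := by exact_mod_cast hn
    rw [r_succ, mul_pow]
    calc (4 * ((n + 1 : ℕ) : ℝ))⁻¹
        ≤ (4 * (n : ℝ))⁻¹ * ((2 * n + 1) / (2 * n + 2)) ^ 2 := by
          rw [div_pow, ← div_eq_inv_mul, div_div, inv_eq_one_div,
            div_le_div_iff₀ (by positivity) (by positivity)]
          push_cast
          nlinarith
      _ ≤ r n ^ 2 * ((2 * n + 1) / (2 * n + 2)) ^ 2 := by gcongr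

lemma inv_four_mul_le_r_sq (n : ℕ) : (4 * ((n : ℝ) + 1))⁻¹ ≤ r n ^ 2 := by
  rcases n with _ | n
  · norm_num [r_zero]
  · calc (4 * (((n + 1 : ℕ) : ℝ) + 1))⁻¹ ≤ (4 * ((n + 1 : ℕ) : ℝ))⁻¹ := by
          gcongr; linarith
      _ ≤ r (n + 1) ^ 2 := inv_four_mul_le_r_sq_of_pos n.succ_pos

lemma r_le_c (β : ℝ) (hβ : 0 ≤ β) (i : ℕ) : r i ≤ c β i := by
  have h := single_le_sum (f := fun j => β ^ (i - j) * r j * r (i - j))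
    (fun j _ => by have := (r_pos j).le; have := (r_pos (i - j)).le; positivity)
    (self_mem_range_succ i)
  simpa [r_zero, c] using h

lemma r_mul_r_le (j m : ℕ) : r j * r m ≤ (√(((j + m : ℕ) : ℝ) + 1))⁻¹ := by
  rw [← Real.sqrt_inv]
  refine Real.le_sqrt_of_sq_le ?_
  rw [mul_pow]
  calc r j ^ 2 * r m ^ 2 ≤ ((j : ℝ) + 1)⁻¹ * ((m : ℝ) + 1)⁻¹ := by
        gcongr
        · exact r_sq_le j
        · exact r_sq_le m
    _ ≤ (((j + m : ℕ) : ℝ) + 1)⁻¹ := by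
        rw [← mul_inv]
        gcongr
        push_cast
        nlinarith [(j.cast_nonneg : (0 : ℝ) ≤ j), (m.cast_nonneg : (0 : ℝ) ≤ m)]

lemma c_le (β : ℝ) (hβ0 : 0 ≤ β) (hβ1 : β < 1) (i : ℕ) :
    c β i ≤ (1 - β)⁻¹ * (√((i : ℝ) + 1))⁻¹ := by
  have hterm : ∀ j ∈ range (i + 1),
      β ^ (i - j) * r j * r (i - j) ≤ β ^ (i - j) * (√((i : ℝ) + 1))⁻¹ := by
    intro j hj
    have hji : j + (i - j) = i := Nat.add_sub_cancel' (Nat.lt_succ_iff.mp (mem_range.mp hj))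
    rw [mul_assoc]
    gcongr
    simpa only [hji] using r_mul_r_le j (i - j)
  have hgeom : ∑ j ∈ range (i + 1), β ^ (i - j) ≤ (1 - β)⁻¹ := by
    have hreflect := sum_range_reflect (fun m => β ^ m) (i + 1)
    simp only [add_tsub_cancel_right] at hreflect
    rw [hreflect, range_eq_Ico, inv_eq_one_div, ← pow_zero β]
    exact geom_sum_Ico_le_of_lt_one hβ0 hβ1
  calc c β i ≤ ∑ j ∈ range (i + 1), β ^ (i - j) * (√((i : ℝ) + 1))⁻¹ := sum_le_sum hterm
    _ = (∑ j ∈ range (i + 1), β ^ (i - j)) * (√((i : ℝ) + 1))⁻¹ := (sum_mul ..).symm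
    _ ≤ (1 - β)⁻¹ * (√((i : ℝ) + 1))⁻¹ := by gcongr

lemma harmonic_eq_sum_range (k : ℕ) : (harmonic k : ℝ) = ∑ i ∈ range k, ((i : ℝ) + 1)⁻¹ := by
  simp [harmonic]

theorem stmt_15_general (β : ℝ) (hβ0 : 0 ≤ β) (hβ1 : β < 1) (k : ℕ) :
    Real.log (k + 1) / 4 ≤ ∑ i ∈ Finset.range k, (c β i)^2 ∧
      ∑ i ∈ Finset.range k, (c β i)^2 ≤ (1 + Real.log k) / (1 - β)^2 := by
  constructor
  · calc Real.log (k + 1) / 4 ≤ harmonic k / 4 := by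
          gcongr
          exact_mod_cast log_add_one_le_harmonic k
      _ = ∑ i ∈ range k, (4 * ((i : ℝ) + 1))⁻¹ := by
          rw [harmonic_eq_sum_range, sum_div]
          exact sum_congr rfl fun i _ => by rw [mul_inv, div_eq_inv_mul, mul_comm]
      _ ≤ ∑ i ∈ range k, (c β i) ^ 2 := sum_le_sum fun i _ =>
          (inv_four_mul_le_r_sq i).trans (pow_le_pow_left₀ (r_pos i).le (r_le_c β hβ0 i) 2)
  · calc ∑ i ∈ range k, (c β i) ^ 2
        ≤ ∑ i ∈ range k, ((1 - β)⁻¹ * (√((i : ℝ) + 1))⁻¹) ^ 2 := sum_le_sum fun i _ =>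
          pow_le_pow_left₀ ((r_pos i).le.trans (r_le_c β hβ0 i)) (c_le β hβ0 hβ1 i) 2
      _ = harmonic k / (1 - β) ^ 2 := by
          rw [harmonic_eq_sum_range, sum_div]
          refine sum_congr rfl fun i _ => ?_
          rw [mul_pow, inv_pow, inv_pow, Real.sq_sqrt (by positivity)]
          ring
      _ ≤ (1 + Real.log k) / (1 - β) ^ 2 := by
          gcongr
          exact harmonic_le_one_add_log k

theorem stmt_15 (β : ℝ) (hβ0 : 0 ≤ β) (hβ1 : β < 1) (k : ℕ) (hk : 1 ≤ k) :
    Real.log (k + 1) / 4 ≤ ∑ i ∈ Finset.range k, (c β i)^2 ∧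
      ∑ i ∈ Finset.range k, (c β i)^2 ≤ (1 + Real.log k) / (1 - β)^2 :=
  stmt_15_general β hβ0 hβ1 k
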